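/- The function φ(θ) = sin θ / (1 + sin θ − cos θ) is strictly decreasing on the interval (0, π/4]. -/

import Mathlib

/-! With `t = tan (θ / 2)` the half-angle formulas give
`sin θ / (1 + sin θ - cos θ) = 1 / (1 + t)`, and `t` increases with `θ` on `(0, π)`. -/

open Real Set

lemma sin_two_mul_div_eq_one_div_one_add_tan {x : ℝ} (hx₀ : 0 < x) (hx : x < π / 2) :
    sin (2 * x) / (1 + sin (2 * x) - cos (2 * x)) = 1 / (1 + tan x) := by
  have hs : 0 < sin x := sin_pos_of_pos_of_lt_pi hx₀ (by linarith [pi_pos])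
  have hc : 0 < cos x := cos_pos_of_mem_Ioo ⟨by linarith, hx⟩
  have hden : 1 + sin (2 * x) - cos (2 * x) = 2 * sin x * (cos x + sin x) := by
    rw [sin_two_mul, cos_two_mul', ← sin_sq_add_cos_sq x]
    ring
  rw [hden, sin_two_mul, tan_eq_sin_div_cos]
  field_simp

lemma strictAntiOn_sin_div_one_add_sin_sub_cos :
    StrictAntiOn (fun θ : ℝ => sin θ / (1 + sin θ - cos θ)) (Ioo 0 π) := by
  intro a ⟨ha₀, ha⟩ b ⟨hb₀, hb⟩ hab
  have half_eq {θ : ℝ} : θ = 2 * (θ / 2) := by ring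
  simp only
  rw [half_eq (θ := a), half_eq (θ := b),
    sin_two_mul_div_eq_one_div_one_add_tan (by linarith) (by linarith),
    sin_two_mul_div_eq_one_div_one_add_tan (by linarith) (by linarith)]
  have htan : tan (a / 2) < tan (b / 2) :=
    strictMonoOn_tan ⟨by linarith, by linarith⟩ ⟨by linarith, by linarith⟩ (by linarith)
  have htan₀ : 0 < tan (a / 2) := tan_pos_of_pos_of_lt_pi_div_two (by linarith) (by linarith)
  exact one_div_lt_one_div_of_lt (by linarith) (by linarith)

theorem stmt_10 :
    StrictAntiOn (fun θ : ℝ => sin θ / (1 + sin θ - cos θ)) (Ioc 0 (π / 4)) :=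
  strictAntiOn_sin_div_one_add_sin_sub_cos.mono fun _ ⟨h₀, h⟩ => ⟨h₀, by linarith [pi_pos]⟩
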